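/- Let n be a positive integer with ν_n < −β, and set a = √((−β − λ_n)/(ϱ·λ_n)), b = √((−β − μ_n)/(ϱ·λ_n)), p = √((−β + μ_n − ν_n − λ_n + √((β + λ_n + μ_n − ν_n)(β + ν_n)))/(2ϱ·λ_n)) and q = √((−β + μ_n − ν_n − λ_n − √((β + λ_n + μ_n − ν_n)(β + ν_n)))/(2ϱ·λ_n)). Then the set of pairs (α, γ) ∈ ℝ² with (α, γ) ≠ (0, 0) such that the pair (α·e_n, γ·e_n) is a solution of the double-beam system is exactly the eight-element set {(a, a), (−a, −a), (b, −b), (−b, b), (p, −q), (−p, q), (q, −p), (−q, p)}. -/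

import Mathlib

open Real Set

noncomputable def ee (n : ℕ) : ℝ → ℝ := fun x => Real.sqrt 2 * Real.sin (n * Real.pi * x)

noncomputable def lam (n : ℕ) : ℝ := (n : ℝ) ^ 2 * Real.pi ^ 2

noncomputable def energy (u : ℝ → ℝ) : ℝ := ∫ s in (0:ℝ)..1, (deriv u s) ^ 2

/-- `(u, v)` is a solution of the double-beam system with parameters `β ϱ k`. -/
def DBSol (β ϱ k : ℝ) (u v : ℝ → ℝ) : Prop :=
  ContDiff ℝ 4 u ∧ ContDiff ℝ 4 v ∧
  (∀ x ∈ Set.Icc (0:ℝ) 1,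
    iteratedDeriv 4 u x - (β + ϱ * energy u) * iteratedDeriv 2 u x + k * (u x - v x) = 0) ∧
  (∀ x ∈ Set.Icc (0:ℝ) 1,
    iteratedDeriv 4 v x - (β + ϱ * energy v) * iteratedDeriv 2 v x - k * (u x - v x) = 0) ∧
  u 0 = 0 ∧ u 1 = 0 ∧ iteratedDeriv 2 u 0 = 0 ∧ iteratedDeriv 2 u 1 = 0 ∧
  v 0 = 0 ∧ v 1 = 0 ∧ iteratedDeriv 2 v 0 = 0 ∧ iteratedDeriv 2 v 1 = 0

lemma deriv_sinBx (A B : ℝ) : deriv (fun x => A * Real.sin (B * x)) = fun x => (A * B) * Real.cos (B * x) := by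
  funext x
  have h : HasDerivAt (fun x : ℝ => A * Real.sin (B * x)) (A * (Real.cos (B * x) * (B * 1))) x := by
    exact (((Real.hasDerivAt_sin (B * x)).comp x ((hasDerivAt_id x).const_mul B))).const_mul A
  rw [h.deriv]; ring

lemma deriv_cosBx (A B : ℝ) : deriv (fun x => A * Real.cos (B * x)) = fun x => (-(A * B)) * Real.sin (B * x) := by
  funext x
  have h : HasDerivAt (fun x : ℝ => A * Real.cos (B * x)) (A * (-Real.sin (B * x) * (B * 1))) x := by
    exact (((Real.hasDerivAt_cos (B * x)).comp x ((hasDerivAt_id x).const_mul B))).const_mul A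
  rw [h.deriv]; ring

lemma cmul_ee (c : ℝ) (n : ℕ) : (fun x => c * ee n x) = fun x => (c * Real.sqrt 2) * Real.sin ((n * Real.pi) * x) := by
  funext x; simp [ee]; ring

lemma contDiff_cee (c : ℝ) (n : ℕ) : ContDiff ℝ 4 (fun x => c * ee n x) := by
  rw [cmul_ee]
  exact contDiff_const.mul ((Real.contDiff_sin.of_le le_top).comp (contDiff_const.mul contDiff_id))

lemma d2_cee (c : ℝ) (n : ℕ) : iteratedDeriv 2 (fun x => c * ee n x) = fun x => -(lam n) * (c * ee n x) := by
  rw [cmul_ee]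
  rw [show (2:ℕ) = 1+1 from rfl, iteratedDeriv_succ, iteratedDeriv_one]
  rw [deriv_sinBx, deriv_cosBx]
  funext x; simp [ee, lam]; ring

lemma d4_cee (c : ℝ) (n : ℕ) : iteratedDeriv 4 (fun x => c * ee n x) = fun x => (lam n)^2 * (c * ee n x) := by
  rw [show (4:ℕ) = 2+1+1 from rfl, iteratedDeriv_succ, iteratedDeriv_succ, d2_cee]
  have : (fun x => -(lam n) * (c * ee n x)) = fun x => ((-(lam n) * c) * Real.sqrt 2) * Real.sin ((n * Real.pi) * x) := by
    funext x; simp [ee]; ring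
  rw [this, deriv_sinBx, deriv_cosBx]
  funext x; simp [ee, lam]; ring

lemma energy_cee (c : ℝ) (n : ℕ) (hn : 0 < n) : energy (fun x => c * ee n x) = c^2 * lam n := by
  have hB : (0:ℝ) < n * Real.pi := by positivity
  rw [energy, cmul_ee, deriv_sinBx]
  have : ∀ s : ℝ, ((c * Real.sqrt 2) * ((n:ℝ) * Real.pi) * Real.cos ((n * Real.pi) * s))^2
      = (c^2 * 2 * ((n:ℝ)*Real.pi)^2) * Real.cos ((n * Real.pi) * s)^2 := by
    intro s
    have h2 : Real.sqrt 2 ^ 2 = 2 := Real.sq_sqrt (by norm_num)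
    nlinarith [h2]
  simp only [this]
  rw [intervalIntegral.integral_const_mul]
  have := intervalIntegral.integral_comp_mul_left (fun x => Real.cos x ^ 2) (c := (n:ℝ)*Real.pi) (a := 0) (b := 1) (ne_of_gt hB)
  rw [this]
  rw [integral_cos_sq]
  have hsin : Real.sin ((n:ℝ) * Real.pi * 1) = 0 := by
    rw [mul_one]; exact Real.sin_nat_mul_pi n
  rw [hsin]
  simp [lam]
  field_simp

lemma ee_zero (n : ℕ) : ee n 0 = 0 := by simp [ee]
lemma ee_one (n : ℕ) : ee n 1 = 0 := by simp [ee, Real.sin_nat_mul_pi]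

lemma ee_half (n : ℕ) (hn : 0 < n) : ee n (1/(2*n)) = Real.sqrt 2 := by
  have hn' : (n:ℝ) ≠ 0 := Nat.cast_ne_zero.mpr hn.ne'
  have : (n : ℝ) * Real.pi * (1/(2*n)) = Real.pi / 2 := by field_simp
  unfold ee; rw [this, Real.sin_pi_div_two, mul_one]

lemma half_mem (n : ℕ) (hn : 0 < n) : (1/(2*(n:ℝ))) ∈ Set.Icc (0:ℝ) 1 := by
  have h1 : (1:ℝ) ≤ n := Nat.one_le_cast.mpr hn
  constructor
  · positivity
  · rw [div_le_one (by positivity)]; linarith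

lemma DBSol_iff (β ϱ k : ℝ) (n : ℕ) (hn : 0 < n) (α γ : ℝ) :
    DBSol β ϱ k (fun x => α * ee n x) (fun x => γ * ee n x) ↔
      ((lam n)^2 * α + (β + ϱ * (α^2 * lam n)) * (lam n * α) + k * (α - γ) = 0 ∧
       (lam n)^2 * γ + (β + ϱ * (γ^2 * lam n)) * (lam n * γ) - k * (α - γ) = 0) := by
  constructor
  · rintro ⟨-, -, h3, h4, -⟩
    have h3' := h3 _ (half_mem n hn)
    have h4' := h4 _ (half_mem n hn)
    simp only [d2_cee, d4_cee, energy_cee _ n hn, ee_half n hn] at h3' h4'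
    have h2 : Real.sqrt 2 ≠ 0 := by positivity
    constructor
    · have : ((lam n)^2 * α + (β + ϱ * (α^2 * lam n)) * (lam n * α) + k * (α - γ)) * Real.sqrt 2 = 0 := by
        rw [← h3']; ring
      exact (mul_eq_zero.mp this).resolve_right h2
    · have : ((lam n)^2 * γ + (β + ϱ * (γ^2 * lam n)) * (lam n * γ) - k * (α - γ)) * Real.sqrt 2 = 0 := by
        rw [← h4']; ring
      exact (mul_eq_zero.mp this).resolve_right h2
  · rintro ⟨e1, e2⟩
    refine ⟨contDiff_cee α n, contDiff_cee γ n, ?_, ?_, ?_, ?_, ?_, ?_, ?_, ?_, ?_, ?_⟩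
    · intro x hx
      rw [d2_cee, d4_cee, energy_cee α n hn]
      have : ((lam n)^2 * α + (β + ϱ * (α^2 * lam n)) * (lam n * α) + k * (α - γ)) * ee n x = 0 := by
        rw [e1]; ring
      calc (lam n)^2 * (α * ee n x) - (β + ϱ * (α ^ 2 * lam n)) * (-(lam n) * (α * ee n x)) + k * (α * ee n x - γ * ee n x)
          = ((lam n)^2 * α + (β + ϱ * (α^2 * lam n)) * (lam n * α) + k * (α - γ)) * ee n x := by ring
        _ = 0 := this
    · intro x hx
      rw [d2_cee, d4_cee, energy_cee γ n hn]
      have : ((lam n)^2 * γ + (β + ϱ * (γ^2 * lam n)) * (lam n * γ) - k * (α - γ)) * ee n x = 0 := by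
        rw [e2]; ring
      calc (lam n)^2 * (γ * ee n x) - (β + ϱ * (γ ^ 2 * lam n)) * (-(lam n) * (γ * ee n x)) - k * (α * ee n x - γ * ee n x)
          = ((lam n)^2 * γ + (β + ϱ * (γ^2 * lam n)) * (lam n * γ) - k * (α - γ)) * ee n x := by ring
        _ = 0 := this
    · simp [ee_zero]
    · simp [ee_one]
    · rw [d2_cee]; simp [ee_zero]
    · rw [d2_cee]; simp [ee_one]
    · simp [ee_zero]
    · simp [ee_one]
    · rw [d2_cee]; simp [ee_zero]
    · rw [d2_cee]; simp [ee_one]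

set_option maxHeartbeats 1000000 in
theorem stmt4 (β ϱ k : ℝ) (hϱ : 0 < ϱ) (hk : 0 < k) (n : ℕ) (hn : 0 < n)
    (h1 : 3 * k / lam n + lam n < -β)
    (μ ν a b p q : ℝ)
    (hμ : μ = 2 * k / lam n + lam n) (hν : ν = 3 * k / lam n + lam n)
    (ha : a = Real.sqrt ((-β - lam n) / (ϱ * lam n)))
    (hb : b = Real.sqrt ((-β - μ) / (ϱ * lam n)))
    (hp : p = Real.sqrt ((-β + μ - ν - lam n +
        Real.sqrt ((β + lam n + μ - ν) * (β + ν))) / (2 * ϱ * lam n)))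
    (hq : q = Real.sqrt ((-β + μ - ν - lam n -
        Real.sqrt ((β + lam n + μ - ν) * (β + ν))) / (2 * ϱ * lam n))) :
    {P : ℝ × ℝ | P ≠ (0, 0) ∧
        DBSol β ϱ k (fun x => P.1 * ee n x) (fun x => P.2 * ee n x)}
      = {(a, a), (-a, -a), (b, -b), (-b, b), (p, -q), (-p, q), (q, -p), (-q, p)} := by
  subst hμ; subst hν
  obtain ⟨L, hLdef⟩ : ∃ x, x = lam n := ⟨_, rfl⟩
  rw [← hLdef] at h1 ha hb hp hq
  have hL : 0 < L := by
    have hn' : (0:ℝ) < (n:ℝ) := by exact_mod_cast hn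
    have hπ : (0:ℝ) < Real.pi := Real.pi_pos
    rw [hLdef]; unfold lam; positivity
  have hL0 : L ≠ 0 := hL.ne'
  have hϱ0 : ϱ ≠ 0 := hϱ.ne'
  have hkL : 0 < k / L := div_pos hk hL
  -- basic inequality: β + L + 3k/L < 0
  have hβ3 : β + L + 3 * k / L < 0 := by linarith
  obtain ⟨S, hSdef⟩ : ∃ x, x = Real.sqrt ((β + L + (2 * k / L + L) - (3 * k / L + L)) * (β + (3 * k / L + L))) := ⟨_, rfl⟩
  rw [← hSdef] at hp hq
  have e2 : 2 * k / L = 2 * (k / L) := by ring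
  have e3 : 3 * k / L = 3 * (k / L) := by ring
  have hF1 : β + L + (2 * k / L + L) - (3 * k / L + L) < 0 := by linarith
  have hF2 : β + (3 * k / L + L) < 0 := by linarith
  have hargS : 0 ≤ (β + L + (2 * k / L + L) - (3 * k / L + L)) * (β + (3 * k / L + L)) := by
    nlinarith [mul_pos (neg_pos.mpr hF1) (neg_pos.mpr hF2)]
  have hS0 : 0 ≤ S := by rw [hSdef]; exact Real.sqrt_nonneg _
  have hS2 : S ^ 2 = (β + L + (2 * k / L + L) - (3 * k / L + L)) * (β + (3 * k / L + L)) := by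
    rw [hSdef]; exact Real.sq_sqrt hargS
  have hS2L : L ^ 2 * S ^ 2 = (β * L + L ^ 2 - k) * (β * L + L ^ 2 + 3 * k) := by
    rw [hS2]; field_simp; ring
  have hRpos : 0 < -β - L - k / L := by linarith
  have hSlt : S < -β - L - k / L := by
    have harglt : (β + L + (2 * k / L + L) - (3 * k / L + L)) * (β + (3 * k / L + L))
        < (-β - L - k / L) ^ 2 := by
      nlinarith [mul_pos hkL hkL]
    have h := Real.sqrt_lt_sqrt hargS harglt
    rw [Real.sqrt_sq hRpos.le] at h
    rw [hSdef]; exact h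
  -- squared values
  have haarg : 0 ≤ (-β - L) / (ϱ * L) := by
    apply div_nonneg _ (by positivity)
    linarith
  have ha0 : 0 < a := by
    rw [ha]; apply Real.sqrt_pos.mpr
    apply div_pos _ (by positivity)
    linarith
  have ha2 : a ^ 2 = (-β - L) / (ϱ * L) := by rw [ha]; exact Real.sq_sqrt haarg
  have ha2' : ϱ * L ^ 2 * a ^ 2 = -β * L - L ^ 2 := by
    rw [ha2]; field_simp
  have hbargpos : 0 < (-β - (2 * k / L + L)) / (ϱ * L) := by
    apply div_pos _ (by positivity)
    linarith
  have hb0 : 0 < b := by rw [hb]; exact Real.sqrt_pos.mpr hbargpos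
  have hb2 : b ^ 2 = (-β - (2 * k / L + L)) / (ϱ * L) := by
    rw [hb]; exact Real.sq_sqrt hbargpos.le
  have hb2' : ϱ * L ^ 2 * b ^ 2 = -β * L - L ^ 2 - 2 * k := by
    rw [hb2]; field_simp; ring
  have hpargpos : 0 < (-β + (2 * k / L + L) - (3 * k / L + L) - L + S) / (2 * ϱ * L) := by
    apply div_pos _ (by positivity)
    linarith
  have hqargpos : 0 < (-β + (2 * k / L + L) - (3 * k / L + L) - L - S) / (2 * ϱ * L) := by
    apply div_pos _ (by positivity)
    linarith
  have hp0 : 0 < p := by rw [hp]; exact Real.sqrt_pos.mpr hpargpos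
  have hq0 : 0 < q := by rw [hq]; exact Real.sqrt_pos.mpr hqargpos
  have hp2 : p ^ 2 = (-β + (2 * k / L + L) - (3 * k / L + L) - L + S) / (2 * ϱ * L) := by
    rw [hp]; exact Real.sq_sqrt hpargpos.le
  have hq2 : q ^ 2 = (-β + (2 * k / L + L) - (3 * k / L + L) - L - S) / (2 * ϱ * L) := by
    rw [hq]; exact Real.sq_sqrt hqargpos.le
  have hp2' : 2 * ϱ * L ^ 2 * p ^ 2 = -β * L - L ^ 2 - k + L * S := by
    rw [hp2]; field_simp; ring
  have hq2' : 2 * ϱ * L ^ 2 * q ^ 2 = -β * L - L ^ 2 - k - L * S := by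
    rw [hq2]; field_simp; ring
  have hpqsq : (ϱ * L ^ 2 * (p * q)) ^ 2 = k ^ 2 := by
    linear_combination (ϱ * L ^ 2 * p ^ 2 / 2) * hq2' + ((-β * L - L ^ 2 - k - L * S) / 4) * hp2'
      - (1 / 4) * hS2L
  have hpq' : ϱ * L ^ 2 * (p * q) = k := by
    have hfac : (ϱ * L ^ 2 * (p * q) - k) * (ϱ * L ^ 2 * (p * q) + k) = 0 := by
      linear_combination hpqsq
    rcases mul_eq_zero.mp hfac with h | h
    · linarith
    · exfalso
      have hpos : 0 < ϱ * L ^ 2 * (p * q) := mul_pos (mul_pos hϱ (pow_pos hL 2)) (mul_pos hp0 hq0)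
      linarith
  -- main set equality
  ext ⟨α, γ⟩
  simp only [Set.mem_setOf_eq, Set.mem_insert_iff, Set.mem_singleton_iff, Prod.mk.injEq, ne_eq]
  rw [DBSol_iff β ϱ k n hn α γ, ← hLdef]
  constructor
  · rintro ⟨hne, e1, e2⟩
    have hne' : ¬(α = 0 ∧ γ = 0) := hne
    have hsum : (α + γ) * (L ^ 2 + β * L + ϱ * L ^ 2 * (α ^ 2 - α * γ + γ ^ 2)) = 0 := by
      linear_combination e1 + e2
    have hdiff : (α - γ) * (L ^ 2 + β * L + 2 * k + ϱ * L ^ 2 * (α ^ 2 + α * γ + γ ^ 2)) = 0 := by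
      linear_combination e1 - e2
    have hϱL2 : (0:ℝ) < ϱ * L ^ 2 := by positivity
    rcases mul_eq_zero.mp hsum with hs | hs <;> rcases mul_eq_zero.mp hdiff with hd | hd
    · exact absurd ⟨by linarith, by linarith⟩ hne'
    · -- α + γ = 0, quadratic in diff
      have hγ : γ = -α := by linarith
      subst hγ
      have hx : ϱ * L ^ 2 * ((α - b) * (α + b)) = 0 := by
        linear_combination hd - hb2'
      rcases mul_eq_zero.mp ((mul_eq_zero.mp hx).resolve_left hϱL2.ne') with h | h
      · exact Or.inr (Or.inr (Or.inl ⟨by linarith, by linarith⟩))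
      · exact Or.inr (Or.inr (Or.inr (Or.inl ⟨by linarith, by linarith⟩)))
    · -- α - γ = 0, quadratic in sum
      have hγ : γ = α := by linarith
      subst hγ
      have hx : ϱ * L ^ 2 * ((γ - a) * (γ + a)) = 0 := by
        linear_combination hs - ha2'
      rcases mul_eq_zero.mp ((mul_eq_zero.mp hx).resolve_left hϱL2.ne') with h | h
      · exact Or.inl ⟨by linarith, by linarith⟩
      · exact Or.inr (Or.inl ⟨by linarith, by linarith⟩)
    · -- both quadratics
      have hprod : ϱ * L ^ 2 * (α * γ) = -k := by
        linear_combination (1/2) * hd - (1/2) * hs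
      have hsq : ϱ * L ^ 2 * (α ^ 2 + γ ^ 2) = -β * L - L ^ 2 - k := by
        linear_combination hs + hprod
      have hx1 : ϱ * L ^ 2 * (((α + γ) - (p - q)) * ((α + γ) + (p - q))) = 0 := by
        linear_combination hsq + 2 * hprod - (1/2) * hp2' - (1/2) * hq2' + 2 * hpq'
      have hx2 : ϱ * L ^ 2 * (((α - γ) - (p + q)) * ((α - γ) + (p + q))) = 0 := by
        linear_combination hsq - 2 * hprod - (1/2) * hp2' - (1/2) * hq2' - 2 * hpq'
      rcases mul_eq_zero.mp ((mul_eq_zero.mp hx1).resolve_left hϱL2.ne') with h1' | h1' <;>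
        rcases mul_eq_zero.mp ((mul_eq_zero.mp hx2).resolve_left hϱL2.ne') with h2' | h2'
      · exact Or.inr (Or.inr (Or.inr (Or.inr (Or.inl ⟨by linarith, by linarith⟩))))
      · exact Or.inr (Or.inr (Or.inr (Or.inr (Or.inr (Or.inr (Or.inr ⟨by linarith, by linarith⟩))))))
      · exact Or.inr (Or.inr (Or.inr (Or.inr (Or.inr (Or.inr (Or.inl ⟨by linarith, by linarith⟩))))))
      · exact Or.inr (Or.inr (Or.inr (Or.inr (Or.inr (Or.inl ⟨by linarith, by linarith⟩)))))
  · rintro (⟨h1', h2'⟩ | ⟨h1', h2'⟩ | ⟨h1', h2'⟩ | ⟨h1', h2'⟩ | ⟨h1', h2'⟩ | ⟨h1', h2'⟩ | ⟨h1', h2'⟩ | ⟨h1', h2'⟩) <;>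
      rw [h1', h2']
    · exact ⟨fun h => ha0.ne' h.1,
        by linear_combination a * ha2', by linear_combination a * ha2'⟩
    · exact ⟨fun h => ha0.ne' (by linarith [h.1]),
        by linear_combination (-a) * ha2', by linear_combination (-a) * ha2'⟩
    · exact ⟨fun h => hb0.ne' h.1,
        by linear_combination b * hb2', by linear_combination (-b) * hb2'⟩
    · exact ⟨fun h => hb0.ne' (by linarith [h.1]),
        by linear_combination (-b) * hb2', by linear_combination b * hb2'⟩
    · exact ⟨fun h => hp0.ne' h.1,
        by linear_combination (p/2) * hp2' + (p/2) * hq2' - q * hpq',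
        by linear_combination (-q/2) * hp2' + (-q/2) * hq2' + p * hpq'⟩
    · exact ⟨fun h => hp0.ne' (by linarith [h.1]),
        by linear_combination (-p/2) * hp2' + (-p/2) * hq2' + q * hpq',
        by linear_combination (q/2) * hp2' + (q/2) * hq2' - p * hpq'⟩
    · exact ⟨fun h => hq0.ne' h.1,
        by linear_combination (q/2) * hp2' + (q/2) * hq2' - p * hpq',
        by linear_combination (-p/2) * hp2' + (-p/2) * hq2' + q * hpq'⟩
    · exact ⟨fun h => hq0.ne' (by linarith [h.1]),
        by linear_combination (-q/2) * hp2' + (-q/2) * hq2' + p * hpq',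
        by linear_combination (p/2) * hp2' + (p/2) * hq2' - q * hpq'⟩
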